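/- Bouton's theorem: a sum of Nim-heaps of sizes n_1, ..., n_k is a losing position (for the player to move) if and only if the bitwise XOR n_1 ⊕ ... ⊕ n_k equals 0. -/

import Mathlib

universe u

namespace SetTheory

/-- Pre-game, as in the older Mathlib's `SetTheory.PGame` (removed from Mathlib since). -/
inductive PGame : Type (u + 1)
  | mk : ∀ α β : Type u, (α → PGame) → (β → PGame) → PGame

namespace PGame

def LeftMoves : PGame → Type u
  | mk l _ _ _ => l

def RightMoves : PGame → Type u
  | mk _ r _ _ => r

def moveLeft : ∀ g : PGame, LeftMoves g → PGame
  | mk _l _ L _ => L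

def moveRight : ∀ g : PGame, RightMoves g → PGame
  | mk _ _r _ R => R

inductive IsOption : PGame → PGame → Prop
  | moveLeft (x : PGame) (i : x.LeftMoves) : IsOption (x.moveLeft i) x
  | moveRight (x : PGame) (i : x.RightMoves) : IsOption (x.moveRight i) x

theorem wf_isOption : WellFounded IsOption := by
  constructor
  intro x
  induction x with
  | mk l r L R IHl IHr =>
    constructor
    intro y h
    cases h with
    | moveLeft _ i => exact IHl i
    | moveRight _ j => exact IHr j

instance le : LE PGame :=
  ⟨@Sym2.GameAdd.recursion _ IsOption (fun _ _ => Prop) wf_isOption fun x y le =>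
      (∀ i, ¬le y (x.moveLeft i) (Sym2.GameAdd.snd_fst <| IsOption.moveLeft x i)) ∧
        ∀ j, ¬le (y.moveRight j) x (Sym2.GameAdd.fst_snd <| IsOption.moveRight y j)⟩

def Equiv (x y : PGame) : Prop :=
  x ≤ y ∧ y ≤ x

instance : HasEquiv PGame :=
  ⟨Equiv⟩

instance : Zero PGame :=
  ⟨⟨PEmpty, PEmpty, PEmpty.elim, PEmpty.elim⟩⟩

noncomputable instance : Add PGame.{u} :=
  ⟨fun x y => by
    induction x generalizing y with | mk xl xr _ _ IHxl IHxr => _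
    induction y with | mk yl yr yL yR IHyl IHyr => _
    have y := mk yl yr yL yR
    refine ⟨xl ⊕ yl, xr ⊕ yr, Sum.rec ?_ ?_, Sum.rec ?_ ?_⟩
    · exact fun i => IHxl i y
    · exact IHyl
    · exact fun i => IHxr i y
    · exact IHyr⟩

noncomputable def nim (o : Ordinal.{u}) : PGame.{u} :=
  ⟨o.ToType, o.ToType,
    fun x => nim (Ordinal.ToType.mk.symm x).val,
    fun x => nim (Ordinal.ToType.mk.symm x).val⟩
termination_by o
decreasing_by all_goals exact (Ordinal.ToType.mk.symm x).prop

end PGame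

end SetTheory

open SetTheory PGame


namespace BoutonAux

theorem le_def {x y : PGame} :
    x ≤ y ↔ (∀ i, ¬ y ≤ x.moveLeft i) ∧ ∀ j, ¬ y.moveRight j ≤ x := by
  unfold LE.le le
  simp only
  rw [Sym2.GameAdd.recursion_eq]

theorem nim_left (o : Ordinal.{u}) :
    ∀ i : (nim o).LeftMoves, ∃ o' < o, (nim o).moveLeft i = nim o' := by
  rw [nim]
  intro i
  exact ⟨_, (Ordinal.ToType.mk.symm i).prop, rfl⟩

theorem nim_right (o : Ordinal.{u}) :
    ∀ i : (nim o).RightMoves, ∃ o' < o, (nim o).moveRight i = nim o' := by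
  rw [nim]
  intro i
  exact ⟨_, (Ordinal.ToType.mk.symm i).prop, rfl⟩

theorem nim_left_ex (o : Ordinal.{u}) :
    ∀ o' < o, ∃ i : (nim o).LeftMoves, (nim o).moveLeft i = nim o' := by
  rw [nim]
  intro o' h
  refine ⟨Ordinal.ToType.mk ⟨o', h⟩, ?_⟩
  show nim (Ordinal.ToType.mk.symm (Ordinal.ToType.mk ⟨o', h⟩)).val = nim o'
  rw [OrderIso.symm_apply_apply]

theorem nim_right_ex (o : Ordinal.{u}) :
    ∀ o' < o, ∃ i : (nim o).RightMoves, (nim o).moveRight i = nim o' := by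
  rw [nim]
  intro o' h
  refine ⟨Ordinal.ToType.mk ⟨o', h⟩, ?_⟩
  show nim (Ordinal.ToType.mk.symm (Ordinal.ToType.mk ⟨o', h⟩)).val = nim o'
  rw [OrderIso.symm_apply_apply]

theorem add_left_cases (x y : PGame.{u}) (i : (x + y).LeftMoves) :
    (∃ i', (x + y).moveLeft i = x.moveLeft i' + y) ∨
      ∃ j', (x + y).moveLeft i = x + y.moveLeft j' := by
  cases x; cases y
  rcases i with i | i
  · exact Or.inl ⟨i, rfl⟩
  · exact Or.inr ⟨i, rfl⟩

theorem add_right_cases (x y : PGame.{u}) (i : (x + y).RightMoves) :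
    (∃ i', (x + y).moveRight i = x.moveRight i' + y) ∨
      ∃ j', (x + y).moveRight i = x + y.moveRight j' := by
  cases x; cases y
  rcases i with i | i
  · exact Or.inl ⟨i, rfl⟩
  · exact Or.inr ⟨i, rfl⟩

theorem add_left_fst (x y : PGame.{u}) (i' : x.LeftMoves) :
    ∃ i : (x + y).LeftMoves, (x + y).moveLeft i = x.moveLeft i' + y := by
  cases x; cases y
  exact ⟨Sum.inl i', rfl⟩

theorem add_left_snd (x y : PGame.{u}) (j' : y.LeftMoves) :
    ∃ i : (x + y).LeftMoves, (x + y).moveLeft i = x + y.moveLeft j' := by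
  cases x; cases y
  exact ⟨Sum.inr j', rfl⟩

theorem add_right_fst (x y : PGame.{u}) (i' : x.RightMoves) :
    ∃ i : (x + y).RightMoves, (x + y).moveRight i = x.moveRight i' + y := by
  cases x; cases y
  exact ⟨Sum.inl i', rfl⟩

theorem add_right_snd (x y : PGame.{u}) (j' : y.RightMoves) :
    ∃ i : (x + y).RightMoves, (x + y).moveRight i = x + y.moveRight j' := by
  cases x; cases y
  exact ⟨Sum.inr j', rfl⟩

noncomputable def G (l : List ℕ) : PGame.{u} := (l.map fun n : ℕ => nim.{u} (n : Ordinal)).sum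

theorem G_cons (a : ℕ) (l : List ℕ) : G.{u} (a :: l) = nim.{u} (a : Ordinal) + G.{u} l := by
  simp [G]

theorem G_nil : G.{u} [] = 0 := by
  simp [G]

inductive R : List ℕ → List ℕ → Prop
  | head (a b : ℕ) (l : List ℕ) (h : b < a) : R (b :: l) (a :: l)
  | tail (a : ℕ) (l l' : List ℕ) : R l' l → R (a :: l') (a :: l)

theorem R_sum {l' l : List ℕ} (h : R l' l) : l'.sum < l.sum := by
  induction h with
  | head a b l h => simp only [List.sum_cons]; omega
  | tail a l l' _ ih => simp only [List.sum_cons]; omega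

theorem nat_lt (a : ℕ) (o : Ordinal.{u}) (h : o < (a : Ordinal)) : ∃ b < a, o = b := by
  obtain ⟨b, rfl⟩ := Ordinal.lt_omega0.mp (h.trans (Ordinal.natCast_lt_omega0 a))
  exact ⟨b, by exact_mod_cast h, rfl⟩

theorem G_left : ∀ (l : List ℕ) (i : (G.{u} l).LeftMoves),
    ∃ l', R l' l ∧ (G.{u} l).moveLeft i = G.{u} l' := by
  intro l
  induction l with
  | nil =>
    rw [G_nil]
    intro i
    exact PEmpty.elim i
  | cons a l ih =>
    rw [G_cons]
    intro i
    rcases add_left_cases _ _ i with ⟨i', h⟩ | ⟨j', h⟩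
    · obtain ⟨o', ho', he⟩ := nim_left _ i'
      obtain ⟨b, hb, rfl⟩ := nat_lt a o' ho'
      exact ⟨b :: l, R.head a b l hb, by rw [h, he, G_cons]⟩
    · obtain ⟨l', hr, he⟩ := ih j'
      exact ⟨a :: l', R.tail a l l' hr, by rw [h, he, G_cons]⟩

theorem G_right : ∀ (l : List ℕ) (i : (G.{u} l).RightMoves),
    ∃ l', R l' l ∧ (G.{u} l).moveRight i = G.{u} l' := by
  intro l
  induction l with
  | nil =>
    rw [G_nil]
    intro i
    exact PEmpty.elim i
  | cons a l ih =>
    rw [G_cons]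
    intro i
    rcases add_right_cases _ _ i with ⟨i', h⟩ | ⟨j', h⟩
    · obtain ⟨o', ho', he⟩ := nim_right _ i'
      obtain ⟨b, hb, rfl⟩ := nat_lt a o' ho'
      exact ⟨b :: l, R.head a b l hb, by rw [h, he, G_cons]⟩
    · obtain ⟨l', hr, he⟩ := ih j'
      exact ⟨a :: l', R.tail a l l' hr, by rw [h, he, G_cons]⟩

theorem G_left_ex {l' l : List ℕ} (h : R l' l) :
    ∃ i : (G.{u} l).LeftMoves, (G.{u} l).moveLeft i = G.{u} l' := by
  induction h with
  | head a b l h =>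
    rw [G_cons]
    obtain ⟨i', hi'⟩ := nim_left_ex.{u} (a : Ordinal) (b : Ordinal) (by exact_mod_cast h)
    obtain ⟨i, hi⟩ := add_left_fst (nim.{u} (a : Ordinal)) (G.{u} l) i'
    exact ⟨i, by rw [hi, hi', G_cons]⟩
  | tail a l l' _ ih =>
    rw [G_cons]
    obtain ⟨j', hj'⟩ := ih
    obtain ⟨i, hi⟩ := add_left_snd (nim.{u} (a : Ordinal)) (G.{u} l) j'
    exact ⟨i, by rw [hi, hj', G_cons]⟩

theorem G_right_ex {l' l : List ℕ} (h : R l' l) :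
    ∃ i : (G.{u} l).RightMoves, (G.{u} l).moveRight i = G.{u} l' := by
  induction h with
  | head a b l h =>
    rw [G_cons]
    obtain ⟨i', hi'⟩ := nim_right_ex.{u} (a : Ordinal) (b : Ordinal) (by exact_mod_cast h)
    obtain ⟨i, hi⟩ := add_right_fst (nim.{u} (a : Ordinal)) (G.{u} l) i'
    exact ⟨i, by rw [hi, hi', G_cons]⟩
  | tail a l l' _ ih =>
    rw [G_cons]
    obtain ⟨j', hj'⟩ := ih
    obtain ⟨i, hi⟩ := add_right_snd (nim.{u} (a : Ordinal)) (G.{u} l) j'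
    exact ⟨i, by rw [hi, hj', G_cons]⟩

def X (l : List ℕ) : ℕ := l.foldr Nat.xor 0

theorem X_cons (a : ℕ) (l : List ℕ) : X (a :: l) = a ^^^ X l := rfl

theorem X_nil : X [] = 0 := rfl

theorem R_X {l' l : List ℕ} (h : R l' l) : X l' ≠ X l := by
  induction h with
  | head a b l h =>
    rw [X_cons, X_cons]
    intro he
    have := congrArg (· ^^^ X l) he
    simp only [Nat.xor_assoc, Nat.xor_self, Nat.xor_zero] at this
    omega
  | tail a l l' _ ih =>
    rw [X_cons, X_cons]
    intro he
    have := congrArg (a ^^^ ·) he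
    simp only [← Nat.xor_assoc, Nat.xor_self, Nat.zero_xor] at this
    exact ih this

theorem exists_lt : ∀ (l : List ℕ) (c : ℕ), c < X l → ∃ a ∈ l, c ^^^ X l ^^^ a < a := by
  intro l
  induction l with
  | nil => intro c h; rw [X_nil] at h; omega
  | cons a r ih =>
    intro c h
    rw [X_cons] at h
    rcases Nat.lt_xor_cases h with h1 | h1
    · refine ⟨a, List.mem_cons_self, ?_⟩
      have : c ^^^ X (a :: r) ^^^ a = c ^^^ X r := by
        rw [X_cons, Nat.xor_comm a, ← Nat.xor_assoc, Nat.xor_assoc _ a a, Nat.xor_self, Nat.xor_zero]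
      rw [this]; exact h1
    · obtain ⟨b, hb, hb'⟩ := ih _ h1
      refine ⟨b, List.mem_cons_of_mem _ hb, ?_⟩
      have : c ^^^ X (a :: r) ^^^ b = c ^^^ a ^^^ X r ^^^ b := by
        rw [X_cons]; ac_rfl
      rw [this]; exact hb'

theorem exists_R : ∀ (l : List ℕ) (t : ℕ), (∃ a ∈ l, a ^^^ t < a) →
    ∃ l', R l' l ∧ X l' = X l ^^^ t := by
  intro l
  induction l with
  | nil => intro t h; simp at h
  | cons a r ih =>
    intro t h
    by_cases ha : a ^^^ t < a
    · refine ⟨(a ^^^ t) :: r, R.head _ _ _ ha, ?_⟩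
      rw [X_cons, X_cons]; ac_rfl
    · obtain ⟨b, hb, hb'⟩ := h
      rcases List.mem_cons.mp hb with rfl | hb
      · exact absurd hb' ha
      · obtain ⟨l', hr, hx⟩ := ih t ⟨b, hb, hb'⟩
        refine ⟨a :: l', R.tail _ _ _ hr, ?_⟩
        rw [X_cons, X_cons, hx]; ac_rfl

theorem key (l : List ℕ) : (∀ l', R l' l → ¬ X l' = 0) ↔ X l = 0 := by
  constructor
  · intro h
    by_contra hx
    obtain ⟨a, ha, ha'⟩ := exists_lt l 0 (Nat.pos_of_ne_zero hx)
    rw [Nat.zero_xor] at ha'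
    obtain ⟨l', hr, hx'⟩ := exists_R l (X l) ⟨a, ha, by rw [Nat.xor_comm]; exact ha'⟩
    rw [Nat.xor_self] at hx'
    exact h l' hr hx'
  · intro h l' hr hx
    exact R_X hr (hx.trans h.symm)

theorem main (n : ℕ) : ∀ l : List ℕ, l.sum = n →
    (G.{u} l ≤ 0 ↔ X l = 0) ∧ (0 ≤ G.{u} l ↔ X l = 0) := by
  induction n using Nat.strong_induction_on with
  | _ n ih =>
  intro l hl
  have hIH : ∀ l', R l' l → (G.{u} l' ≤ 0 ↔ X l' = 0) ∧ (0 ≤ G.{u} l' ↔ X l' = 0) :=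
    fun l' h => ih _ (hl ▸ R_sum h) l' rfl
  constructor
  · rw [le_def]
    constructor
    · rintro ⟨h1, -⟩
      apply (key l).mp
      intro l' hr hx
      obtain ⟨i, hi⟩ := G_left_ex.{u} hr
      apply h1 i
      rw [hi]
      exact (hIH l' hr).2.mpr hx
    · intro hx
      refine ⟨fun i => ?_, fun j => PEmpty.elim j⟩
      obtain ⟨l', hr, hi⟩ := G_left.{u} l i
      rw [hi, (hIH l' hr).2]
      exact (key l).mpr hx l' hr
  · rw [le_def]
    constructor
    · rintro ⟨-, h1⟩
      apply (key l).mp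
      intro l' hr hx
      obtain ⟨i, hi⟩ := G_right_ex.{u} hr
      apply h1 i
      rw [hi]
      exact (hIH l' hr).1.mpr hx
    · intro hx
      refine ⟨fun i => PEmpty.elim i, fun j => ?_⟩
      obtain ⟨l', hr, hi⟩ := G_right.{u} l j
      rw [hi, (hIH l' hr).1]
      exact (key l).mpr hx l' hr

end BoutonAux

theorem bouton (l : List ℕ) :
    ((l.map fun n : ℕ => nim (n : Ordinal)).sum ≈ 0) ↔ l.foldr Nat.xor 0 = 0 := by
  have h := BoutonAux.main l.sum l rfl
  show BoutonAux.G l ≤ 0 ∧ 0 ≤ BoutonAux.G l ↔ BoutonAux.X l = 0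
  exact ⟨fun h' => h.1.mp h'.1, fun h' => ⟨h.1.mpr h', h.2.mpr h'⟩⟩
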